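/- (Reversibility of ForNo.) For every term T of ForNo and all states ω, ω': if ⟨T, ω⟩ ⇓ ω', then ⟨−T, ω'⟩ ⇓ ω, where −T is the inverse of T given by the inversion map. -/

import Mathlib

set_option linter.unusedVariables false

namespace ForNo

/-- Registers. -/
abbrev Reg := ℕ
/-- Stacks of natural numbers; the head is the top. -/
abbrev Stack := List ℕ
/-- Stores map registers to stacks. -/
abbrev Store := Reg → Stack
/-- A state is a store together with an error counter. -/
abbrev FState := Store × ℕ

/-- The store mapping every register to the empty stack. -/
def emptyStore : Store := fun _ => []

/-- Store update. -/
def upd (φ : Store) (x : Reg) (s : Stack) : Store := fun y => if y = x then s else φ y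

/-- Counter-guarded push operation. -/
def pushOp (n : ℕ) : Stack × ℕ → Stack × ℕ
  | (s, 0) => (n :: s, 0)
  | (s, c + 1) => if s.head? = some n then (s, c + 1) else (s, c)

/-- Counter-guarded pop operation. -/
def popOp (n : ℕ) : Stack × ℕ → Stack × ℕ
  | (s, c) =>
      if s.head? = some n then
        match c with
        | 0 => (s.tail, 0)
        | c + 1 => (s, c + 1)
      else (s, c + 1)

mutual
  /-- Terms of the (raw) language. -/
  inductive Term : Type where
    | skip : Term
    | push : ℕ → Reg → Term
    | pop : ℕ → Reg → Term
    | seq : Term → Term → Term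
    | ifeq : Reg → ℕ → Term → Term
    | normal : List Reg → Term → Term
    | fort : Reg → Bodies → Term
    | roft : Reg → Bodies → Term
  /-- Nonempty lists of iteration bodies. -/
  inductive Bodies : Type where
    | single : Term → Bodies
    | cons : Term → Bodies → Bodies
end

/-- `ps.get i` is `P_min(i,m)` where `ps = P₀ … P_m`. -/
def Bodies.get : Bodies → ℕ → Term
  | .single t, _ => t
  | .cons t _, 0 => t
  | .cons _ ps, i + 1 => ps.get i

mutual
  /-- Big-step operational semantics `⟨T, ω⟩ ⇓ ω'`. -/
  inductive Eval : Term → FState → FState → Prop where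
    | skip : ∀ ω, Eval .skip ω ω
    | seq : ∀ {t u : Term} {ω ω' ω'' : FState},
        Eval t ω ω' → Eval u ω' ω'' → Eval (.seq t u) ω ω''
    | push : ∀ (n : ℕ) (x : Reg) (φ : Store) (c : ℕ),
        Eval (.push n x) (φ, c) (upd φ x (pushOp n (φ x, c)).1, (pushOp n (φ x, c)).2)
    | pop : ∀ (n : ℕ) (x : Reg) (φ : Store) (c : ℕ),
        Eval (.pop n x) (φ, c) (upd φ x (popOp n (φ x, c)).1, (popOp n (φ x, c)).2)
    | ifeq_true : ∀ {x n t} {φ : Store} {c : ℕ} {ω' : FState},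
        (φ x).head? = some n → Eval t (φ, c) ω' → Eval (.ifeq x n t) (φ, c) ω'
    | ifeq_false : ∀ {x n t} (φ : Store) (c : ℕ),
        (φ x).head? ≠ some n → Eval (.ifeq x n t) (φ, c) (φ, c)
    | normal : ∀ {xs t ω ω'}, Eval t ω ω' → Eval (.normal xs t) ω ω'
    | fort : ∀ {x ps ω ω'}, EvalList (ω.1 x) ps ω ω' → Eval (.fort x ps) ω ω'
    | roft : ∀ {x ps ω ω'}, EvalList (ω.1 x).reverse ps ω ω' → Eval (.roft x ps) ω ω'
  /-- Iteration judgment `⟦s, ps, ω⟧ ⇓ ω'`. -/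
  inductive EvalList : Stack → Bodies → FState → FState → Prop where
    | nil : ∀ (ps : Bodies) (ω : FState), EvalList [] ps ω ω
    | cons : ∀ {i : ℕ} {t : Stack} {ps : Bodies} {ω ω'' ω' : FState},
        Eval (ps.get i) ω ω'' → EvalList t ps ω'' ω' → EvalList (i :: t) ps ω ω'
end

mutual
  /-- The inversion map `−(·)` on terms. -/
  def Term.inv : Term → Term
    | .skip => .skip
    | .push n x => .pop n x
    | .pop n x => .push n x
    | .seq t u => .seq u.inv t.inv
    | .ifeq x n t => .ifeq x n t.inv
    | .normal xs t => .normal xs t.inv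
    | .fort x ps => .roft x ps.inv
    | .roft x ps => .fort x ps.inv
  def Bodies.inv : Bodies → Bodies
    | .single t => .single t.inv
    | .cons t ps => .cons t.inv ps.inv
end

mutual
  /-- `t.Writes y` holds iff some `PUSH`/`POP` occurring in `t` writes register `y`. -/
  def Term.Writes : Term → Reg → Prop
    | .skip, _ => False
    | .push _ x, y => x = y
    | .pop _ x, y => x = y
    | .seq t u, y => t.Writes y ∨ u.Writes y
    | .ifeq _ _ t, y => t.Writes y
    | .normal _ t, y => t.Writes y
    | .fort _ ps, y => ps.Writes y
    | .roft _ ps, y => ps.Writes y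
  def Bodies.Writes : Bodies → Reg → Prop
    | .single t, y => t.Writes y
    | .cons t ps, y => t.Writes y ∨ ps.Writes y
end

mutual
  /-- `t.Leads y` holds iff `y` leads some `FOR`/`ROF` iteration occurring in `t`. -/
  def Term.Leads : Term → Reg → Prop
    | .skip, _ => False
    | .push _ _, _ => False
    | .pop _ _, _ => False
    | .seq t u, y => t.Leads y ∨ u.Leads y
    | .ifeq _ _ t, y => t.Leads y
    | .normal _ t, y => t.Leads y
    | .fort x ps, y => x = y ∨ ps.Leads y
    | .roft x ps, y => x = y ∨ ps.Leads y
  def Bodies.Leads : Bodies → Reg → Prop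
    | .single t, y => t.Leads y
    | .cons t ps, y => t.Leads y ∨ ps.Leads y
end

mutual
  /-- `t.Mentions y` holds iff register `y` occurs in `t`. -/
  def Term.Mentions : Term → Reg → Prop
    | .skip, _ => False
    | .push _ x, y => x = y
    | .pop _ x, y => x = y
    | .seq t u, y => t.Mentions y ∨ u.Mentions y
    | .ifeq x _ t, y => x = y ∨ t.Mentions y
    | .normal xs t, y => y ∈ xs ∨ t.Mentions y
    | .fort x ps, y => x = y ∨ ps.Mentions y
    | .roft x ps, y => x = y ∨ ps.Mentions y
  def Bodies.Mentions : Bodies → Reg → Prop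
    | .single t, y => t.Mentions y
    | .cons t ps, y => t.Mentions y ∨ ps.Mentions y
end

mutual
  /-- The finite set of registers occurring in a term. -/
  def Term.regs : Term → Finset Reg
    | .skip => ∅
    | .push _ x => {x}
    | .pop _ x => {x}
    | .seq t u => t.regs ∪ u.regs
    | .ifeq x _ t => insert x t.regs
    | .normal xs t => xs.toFinset ∪ t.regs
    | .fort x ps => insert x ps.regs
    | .roft x ps => insert x ps.regs
  def Bodies.regs : Bodies → Finset Reg
    | .single t => t.regs
    | .cons t ps => t.regs ∪ ps.regs
end

mutual
  /-- Safe terms: generated by the grammar `S` (no `NORMAL`). -/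
  def Term.Safe : Term → Prop
    | .skip => True
    | .push _ _ => True
    | .pop _ _ => True
    | .seq t u => t.Safe ∧ u.Safe
    | .ifeq _ _ t => t.Safe
    | .normal _ _ => False
    | .fort _ ps => ps.Safe
    | .roft _ ps => ps.Safe
  def Bodies.Safe : Bodies → Prop
    | .single t => t.Safe
    | .cons t ps => t.Safe ∧ ps.Safe
end

/-- Raw terms: generated by the grammar `T` (iterations only inside `NORMAL` bodies,
which must be safe). -/
def Term.Raw : Term → Prop
  | .skip => True
  | .push _ _ => True
  | .pop _ _ => True
  | .seq t u => t.Raw ∧ u.Raw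
  | .ifeq _ _ t => t.Raw
  | .normal _ t => t.Safe
  | .fort _ _ => False
  | .roft _ _ => False

mutual
  /-- The read-only constraints (i) and (ii) defining membership in ForNo. -/
  def Term.WF : Term → Prop
    | .skip => True
    | .push _ _ => True
    | .pop _ _ => True
    | .seq t u => t.WF ∧ u.WF
    | .ifeq x _ t => t.WF ∧ ¬ t.Writes x
    | .normal xs t => t.WF ∧ (∀ x ∈ xs, ¬ t.Writes x) ∧ (∀ y, t.Leads y → y ∈ xs)
    | .fort x ps => ps.WF ∧ ¬ ps.Writes x
    | .roft x ps => ps.WF ∧ ¬ ps.Writes x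
  def Bodies.WF : Bodies → Prop
    | .single t => t.WF
    | .cons t ps => t.WF ∧ ps.WF
end

/-- A raw term is in ForNo if it satisfies the read-only constraints. -/
def InForNo (t : Term) : Prop := t.Raw ∧ t.WF

/-- `iterSeq t k` is the `k`-fold sequential composition `t;…;t` (`SKIP` for `k = 0`). -/
def iterSeq (t : Term) : ℕ → Term
  | 0 => .skip
  | 1 => t
  | n + 2 => .seq t (iterSeq t (n + 1))

/-- `mkBodiesAux g i k` is the list of bodies `g i, g (i+1), …, g (i+k)`. -/
def mkBodiesAux (g : ℕ → Term) : ℕ → ℕ → Bodies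
  | i, 0 => .single (g i)
  | i, k + 1 => .cons (g i) (mkBodiesAux g (i + 1) k)

/-- `mkBodies g k` is the list of bodies `g 0, g 1, …, g k`. -/
def mkBodies (g : ℕ → Term) (k : ℕ) : Bodies := mkBodiesAux g 0 k

/-- `COPY(x,y)` with bodies `PUSH[0] y, …, PUSH[k] y`. -/
def COPY (x y : Reg) (k : ℕ) : Term :=
  .normal [x] (.roft x (mkBodies (fun i => .push i y) k))

/-- `n` nested `FOR rgt` iterations around `PUSH[1] p`. -/
def powNest (rgt p : Reg) : ℕ → Term
  | 0 => .push 1 p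
  | n + 1 => .fort rgt (.single (powNest rgt p n))

/-- The term `POW^n`. -/
def POW (rgt p : Reg) (n : ℕ) : Term := .normal [rgt] (powNest rgt p n)

/-- The term `REMOVE-BLANKS` for tape alphabet codes `{0,…,n−1}` and
input alphabet codes `{0,…,m−1}`. -/
def REMOVEBLANKS (rgt g1 : Reg) (n m : ℕ) : Term :=
  .seq (.normal [rgt] (.roft rgt (mkBodies (fun i => .push i g1) (n - 1))))
       (.normal [g1]
         (.seq (.fort g1 (mkBodies (fun i => .pop i rgt) (n - 1)))
               (.roft g1 (mkBodies (fun i => if i < m then .push i rgt else .skip) m))))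

mutual
  /-- Big-step semantics instrumented with the number of rule applications
  in the derivation. -/
  inductive EvalN : ℕ → Term → FState → FState → Prop where
    | skip : ∀ ω, EvalN 1 .skip ω ω
    | seq : ∀ {k l : ℕ} {t u : Term} {ω ω' ω'' : FState},
        EvalN k t ω ω' → EvalN l u ω' ω'' → EvalN (k + l + 1) (.seq t u) ω ω''
    | push : ∀ (n : ℕ) (x : Reg) (φ : Store) (c : ℕ),
        EvalN 1 (.push n x) (φ, c) (upd φ x (pushOp n (φ x, c)).1, (pushOp n (φ x, c)).2)
    | pop : ∀ (n : ℕ) (x : Reg) (φ : Store) (c : ℕ),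
        EvalN 1 (.pop n x) (φ, c) (upd φ x (popOp n (φ x, c)).1, (popOp n (φ x, c)).2)
    | ifeq_true : ∀ {k x n t} {φ : Store} {c : ℕ} {ω' : FState},
        (φ x).head? = some n → EvalN k t (φ, c) ω' → EvalN (k + 1) (.ifeq x n t) (φ, c) ω'
    | ifeq_false : ∀ {x n t} (φ : Store) (c : ℕ),
        (φ x).head? ≠ some n → EvalN 1 (.ifeq x n t) (φ, c) (φ, c)
    | normal : ∀ {k xs t ω ω'}, EvalN k t ω ω' → EvalN (k + 1) (.normal xs t) ω ω'
    | fort : ∀ {k x ps ω ω'}, EvalListN k (ω.1 x) ps ω ω' → EvalN (k + 1) (.fort x ps) ω ω'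
    | roft : ∀ {k x ps ω ω'}, EvalListN k (ω.1 x).reverse ps ω ω' → EvalN (k + 1) (.roft x ps) ω ω'
  inductive EvalListN : ℕ → Stack → Bodies → FState → FState → Prop where
    | nil : ∀ (ps : Bodies) (ω : FState), EvalListN 1 [] ps ω ω
    | cons : ∀ {k l : ℕ} {i : ℕ} {t : Stack} {ps : Bodies} {ω ω'' ω' : FState},
        EvalN k (ps.get i) ω ω'' → EvalListN l t ps ω'' ω' →
        EvalListN (k + l + 1) (i :: t) ps ω ω'
end

/-! ### Turing machines -/

/-- Deterministic one-tape Turing machines with a semi-infinite tape, input/output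
alphabet `S` embedded in the tape alphabet `Γ`, and direction `Bool`
(`false` = left, `true` = right). -/
structure TM (S : Type) where
  Q : Type
  finQ : Fintype Q
  q0 : Q
  qhalt : Q
  Γ : Type
  finΓ : Fintype Γ
  decΓ : DecidableEq Γ
  blank : Γ
  embed : S → Γ
  embed_inj : Function.Injective embed
  blank_notin : ∀ a, embed a ≠ blank
  δ : Q → Γ → Q × Γ × Bool

namespace TM

variable {S : Type}

/-- Configurations `(u, q, v)`: left tape part (nearest cell first), current state,
right tape part starting with the scanned cell (no trailing blanks). -/
abbrev Config (M : TM S) : Type := List M.Γ × M.Q × List M.Γ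

/-- Remove the trailing blanks of a list. -/
def trim (M : TM S) (l : List M.Γ) : List M.Γ :=
  letI := M.decΓ
  (l.reverse.dropWhile (fun a => decide (a = M.blank))).reverse

/-- The single-step transition function. -/
def stepFn (M : TM S) (c : M.Config) : M.Config :=
  let u := c.1
  let q := c.2.1
  let v := c.2.2
  let a := v.headD M.blank
  let r := M.δ q a
  if r.2.2 then (r.2.1 :: u, r.1, v.tail)
  else (u.tail, r.1, M.trim (u.headD M.blank :: r.2.1 :: v.tail))

/-- Single-step transition relation `c ⇝ c'`. -/
def Step (M : TM S) (c c' : M.Config) : Prop := c.2.1 ≠ M.qhalt ∧ c' = M.stepFn c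

/-- `n`-step transition relation `c ⇝ⁿ c'`. -/
def Steps (M : TM S) : ℕ → M.Config → M.Config → Prop
  | 0 => fun c c' => c = c'
  | n + 1 => fun c c'' => ∃ c', M.Step c c' ∧ M.Steps n c' c''

/-- The initial configuration on input `w`. -/
def init (M : TM S) (w : List S) : M.Config := ([], M.q0, w.map M.embed)

/-- `M` is a polynomial-time Turing machine. -/
def PTime (M : TM S) : Prop :=
  ∃ a b : ℕ, 0 < a ∧ 0 < b ∧ ∀ w : List S,
    ∃ k ≤ a * w.length ^ b, ∃ c : M.Config, M.Steps k (M.init w) c ∧ c.2.1 = M.qhalt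

end TM

/-- `f` is computable in polynomial time. -/
def FPTime {S : Type} (f : List S → List S) : Prop :=
  ∃ M : TM S, M.PTime ∧
    ∀ w : List S, ∃ k : ℕ, M.Steps k (M.init w) ([], M.qhalt, (f w).map M.embed)

/-- `f` is honest: the input length is polynomially bounded in the output length. -/
def Honest {S : Type} (f : List S → List S) : Prop :=
  ∃ q : Polynomial ℕ, ∀ x : List S, x.length ≤ q.eval (f x).length

/-! ### Encodings and computed functions -/

/-- An encoding of a finite alphabet `S`: a bijection onto `{0, …, |S| − 1}`. -/
structure Encoding (S : Type) [Fintype S] where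
  enc : S → ℕ
  inj : Function.Injective enc
  lt : ∀ a, enc a < Fintype.card S

/-- Encoding of strings as stacks. -/
def Encoding.encStr {S : Type} [Fintype S] (e : Encoding S) (w : List S) : Stack :=
  w.map e.enc

/-- `T` (with input register `rin` and output register `rout`) computes `f`. -/
def Computes {S : Type} [Fintype S] (e : Encoding S) (T : Term) (rin rout : Reg)
    (f : List S → List S) : Prop :=
  ∀ x : List S, ∃ φ : Store,
    Eval T (upd emptyStore rin (e.encStr x), 0) (φ, 0) ∧ φ rout = e.encStr (f x)

/-- `T` computes `f` with zero-garbage. -/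
def ComputesZG {S : Type} [Fintype S] (e : Encoding S) (T : Term) (rin rout : Reg)
    (f : List S → List S) : Prop :=
  ∀ x : List S, ∃ φ : Store,
    Eval T (upd emptyStore rin (e.encStr x), 0) (φ, 0) ∧ φ rout = e.encStr (f x) ∧
    ∀ y : Reg, y ≠ rout → φ y = []

/-! ### Simulation of Turing machines -/

/-- The register holding the left part of the tape. -/
def lftR : Reg := 0
/-- The register holding the current state. -/
def qR : Reg := 1
/-- The register holding the right part of the tape. -/
def rgtR : Reg := 2

/-- `σ` simulates configuration `c` (written `σ ≈ c`). -/
def Sim {S : Type} (M : TM S) (encΓ : M.Γ → ℕ) (encQ : M.Q → ℕ)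
    (σ : FState) (c : M.Config) : Prop :=
  σ.2 = 0 ∧
  σ.1 lftR = c.1.map encΓ ∧
  (σ.1 qR).head? = some (encQ c.2.1) ∧
  ∃ bs : Stack, (∀ b ∈ bs, b = encΓ M.blank) ∧ σ.1 rgtR = c.2.2.map encΓ ++ bs

/-- `σ` cleanly simulates configuration `c` (written `σ ≅ c`). -/
def SimClean {S : Type} (M : TM S) (encΓ : M.Γ → ℕ) (encQ : M.Q → ℕ)
    (σ : FState) (c : M.Config) : Prop :=
  σ.2 = 0 ∧
  σ.1 lftR = c.1.map encΓ ∧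
  (σ.1 qR).head? = some (encQ c.2.1) ∧
  σ.1 rgtR = c.2.2.map encΓ

/-- The hypotheses of the simulation setup: `encΓ` is a bijection of `Γ` onto
`{0,…,n−1}` giving non-input characters larger codes than input characters,
and `encQ` is an injective encoding of states. -/
def SimSetup {S : Type} (M : TM S) (encΓ : M.Γ → ℕ) (encQ : M.Q → ℕ) : Prop :=
  Function.Injective encΓ ∧
  (∀ a : M.Γ, encΓ a < @Fintype.card M.Γ M.finΓ) ∧
  (∀ a : M.Γ, (∀ s : S, M.embed s ≠ a) → ∀ s : S, encΓ (M.embed s) < encΓ a) ∧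
  Function.Injective encQ

end ForNo
/-!
`pushOp n` and `popOp n` are mutually inverse on (stack, counter) pairs, so each
`PUSH`/`POP` step is undone by its inverse; sequencing and iteration are undone by
running the inverted parts in reverse order. What makes the control flow invertible
is the read-only condition: the register guarding an `IF` or driving a `FOR`/`ROF`
holds the same stack after the body as before, so the inverse takes the same branch
and iterates over the same stack, traversed backwards.
-/

namespace ForNo

theorem upd_eq_update (φ : Store) (x : Reg) (s : Stack) : upd φ x s = Function.update φ x s := by
  funext y
  simp only [upd, Function.update_apply]

theorem popOp_pushOp (n : ℕ) : ∀ p : Stack × ℕ, popOp n (pushOp n p) = p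
  | (s, 0) => by simp [pushOp, popOp]
  | (s, c + 1) => by by_cases h : s.head? = some n <;> simp [pushOp, popOp, h]

theorem pushOp_popOp (n : ℕ) : ∀ p : Stack × ℕ, pushOp n (popOp n p) = p
  | ([], c) => by simp [popOp, pushOp]
  | (a :: s, 0) => by by_cases h : a = n <;> simp [popOp, pushOp, h]
  | (a :: s, c + 1) => by by_cases h : a = n <;> simp [popOp, pushOp, h]

namespace Bodies

theorem inv_get : ∀ (ps : Bodies) (i : ℕ), ps.inv.get i = (ps.get i).inv
  | .single _, _ => rfl
  | .cons _ _, 0 => rfl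
  | .cons _ ps, i + 1 => ps.inv_get i

theorem WF.get : ∀ {ps : Bodies}, ps.WF → ∀ i, (ps.get i).WF
  | .single _, h, _ => h
  | .cons _ _, h, 0 => h.1
  | .cons _ _, h, i + 1 => WF.get h.2 i

theorem not_writes_get {y : Reg} : ∀ {ps : Bodies}, ¬ ps.Writes y → ∀ i, ¬ (ps.get i).Writes y
  | .single _, h, _ => h
  | .cons _ _, h, 0 => fun hw => h (.inl hw)
  | .cons _ _, h, i + 1 => not_writes_get (fun hw => h (.inr hw)) i

end Bodies

mutual

theorem Eval.apply_of_not_writes {t : Term} {ω ω' : FState} {y : Reg} (h : Eval t ω ω')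
    (hy : ¬ t.Writes y) : ω'.1 y = ω.1 y :=
  match h with
  | .skip _ => rfl
  | .seq h₁ h₂ =>
    (h₂.apply_of_not_writes fun hw => hy (.inr hw)).trans
      (h₁.apply_of_not_writes fun hw => hy (.inl hw))
  | .push _ _ _ _ => by simp [upd, Ne.symm hy]
  | .pop _ _ _ _ => by simp [upd, Ne.symm hy]
  | .ifeq_true _ h => h.apply_of_not_writes hy
  | .ifeq_false _ _ _ => rfl
  | .normal h => h.apply_of_not_writes hy
  | .fort h => h.apply_of_not_writes hy
  | .roft h => h.apply_of_not_writes hy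

theorem EvalList.apply_of_not_writes {s : Stack} {ps : Bodies} {ω ω' : FState} {y : Reg}
    (h : EvalList s ps ω ω') (hy : ¬ ps.Writes y) : ω'.1 y = ω.1 y :=
  match h with
  | .nil _ _ => rfl
  | .cons he hl =>
    (hl.apply_of_not_writes hy).trans (he.apply_of_not_writes (Bodies.not_writes_get hy _))

end

theorem EvalList.append {s₁ s₂ : Stack} {ps : Bodies} {ω ω' ω'' : FState}
    (h₁ : EvalList s₁ ps ω ω') (h₂ : EvalList s₂ ps ω' ω'') : EvalList (s₁ ++ s₂) ps ω ω'' := by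
  induction s₁ generalizing ω with
  | nil => cases h₁; exact h₂
  | cons i s ih => cases h₁ with
    | cons he hl => exact .cons he (ih hl)

theorem Eval.pop_after_push (n : ℕ) (x : Reg) (φ : Store) (c : ℕ) :
    Eval (.pop n x) (upd φ x (pushOp n (φ x, c)).1, (pushOp n (φ x, c)).2) (φ, c) := by
  simpa [upd_eq_update, popOp_pushOp] using
    Eval.pop n x (upd φ x (pushOp n (φ x, c)).1) (pushOp n (φ x, c)).2

theorem Eval.push_after_pop (n : ℕ) (x : Reg) (φ : Store) (c : ℕ) :
    Eval (.push n x) (upd φ x (popOp n (φ x, c)).1, (popOp n (φ x, c)).2) (φ, c) := by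
  simpa [upd_eq_update, pushOp_popOp] using
    Eval.push n x (upd φ x (popOp n (φ x, c)).1) (popOp n (φ x, c)).2

mutual

theorem Eval.inv_of_wf {t : Term} {ω ω' : FState} (h : Eval t ω ω') (ht : t.WF) :
    Eval t.inv ω' ω :=
  match h with
  | .skip ω => .skip ω
  | .seq h₁ h₂ => .seq (h₂.inv_of_wf ht.2) (h₁.inv_of_wf ht.1)
  | .push n x φ c => .pop_after_push n x φ c
  | .pop n x φ c => .push_after_pop n x φ c
  | .ifeq_true hx h (ω' := (_, _)) =>
    .ifeq_true ((congrArg List.head? (h.apply_of_not_writes ht.2)).trans hx) (h.inv_of_wf ht.1)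
  | .ifeq_false φ c hx => .ifeq_false φ c hx
  | .normal h => .normal (h.inv_of_wf ht.1)
  | .fort h => .roft (h.apply_of_not_writes ht.2 ▸ h.inv_reverse ht.1)
  | .roft h => .fort (by simpa [h.apply_of_not_writes ht.2] using h.inv_reverse ht.1)

theorem EvalList.inv_reverse {s : Stack} {ps : Bodies} {ω ω' : FState}
    (h : EvalList s ps ω ω') (hps : ps.WF) : EvalList s.reverse ps.inv ω' ω :=
  match h with
  | .nil ps ω => .nil ps.inv ω
  | .cons (i := i) he hl => by
    rw [List.reverse_cons]
    refine (hl.inv_reverse hps).append (.cons ?_ (.nil _ _))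
    rw [Bodies.inv_get]
    exact he.inv_of_wf (hps.get i)

end

end ForNo

open ForNo in
/-- Reversibility of ForNo: if `⟨T, ω⟩ ⇓ ω'` then `⟨−T, ω'⟩ ⇓ ω`. -/
theorem forno_reversible (T : Term) (hT : InForNo T) (ω ω' : FState)
    (h : Eval T ω ω') : Eval T.inv ω' ω := h.inv_of_wf hT.2
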